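/- arXiv:1810.09366 — 5 statements merged into one kernel-verified Lean document; each statement's English description precedes it below -/
import Mathlib

section
/- Let $M$ be a set of equivalent probability measures on $(\Omega, \mathcal{F})$ with filtration $\mathcal{F}_n$, consistent with the filtration. For any measures $Q, P \in M$ and the associated measure $R_s^k$ ($k \ge s \ge n$), the identity $E^{R_s^k}\{\xi \mid \mathcal{F}_n\} = E^Q\left\{\xi \frac{E^Q\{\frac{dP}{dQ} \mid \mathcal{F}_k\}}{E^Q\{\frac{dP}{dQ} \mid \mathcal{F}_s\}} \mid \mathcal{F}_n\right\}$ holds almost surely for every nonnegative random variable $\xi$ with $\sup_{P \in M} E^P \xi < \infty$. In particular, $E^Q\{\frac{dR_s^k}{dQ} \mid \mathcal{F}_n\} = 1$ almost surely. -/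
open MeasureTheory Filter

/-- The measure `R_s^k` built from the pair `(Q, P)`: it has density
`E^{Q}[dP/dQ | ℱ k] / E^{Q}[dP/dQ | ℱ s]` with respect to `Q`. -/
noncomputable def Rmeas {Ω : Type*} {m0 : MeasurableSpace Ω} (ℱ : Filtration ℕ m0)
    (Q1 Q2 : Measure Ω) (s k : ℕ) : Measure Ω :=
  Q1.withDensity (fun ω => ENNReal.ofReal
    ((Q1[fun ω' => (Q2.rnDeriv Q1 ω').toReal | ℱ k]) ω /
     (Q1[fun ω' => (Q2.rnDeriv Q1 ω').toReal | ℱ s]) ω))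

/-- A set of (mutually equivalent) measures is consistent with the filtration if it is
stable under forming the measures `R_s^k`. -/
def ConsistentWithFiltration {Ω : Type*} {m0 : MeasurableSpace Ω} (ℱ : Filtration ℕ m0)
    (M : Set (Measure Ω)) : Prop :=
  ∀ Q1 ∈ M, ∀ Q2 ∈ M, ∀ s k : ℕ, s ≤ k → Rmeas ℱ Q1 Q2 s k ∈ M

/-!
Write `f = dP/dQ`. Since `Q ≪ P`, `f > 0` and hence `E^Q[f | ℱ s] > 0` a.e. For `A ∈ ℱ s`, pulling
the `ℱ s`-measurable factor `1_A / E^Q[f | ℱ s]` out of the conditional expectation given `ℱ s`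
(in `ℝ≥0∞`, so no integrability of the ratio is needed) gives
`R_s^k(A) = ∫_A E^Q[E^Q[f | ℱ k] | ℱ s] / E^Q[f | ℱ s] dQ = Q(A)`.
So `R_s^k` and `Q` agree on `ℱ s ⊇ ℱ n`. Then `ℱ n`-measurable functions have the same set
integrals over `ℱ n`-sets under both measures, which is Bayes' formula for the conditional
expectation under `R_s^k`, and also says that `dR_s^k/dQ` has conditional expectation `1`.
-/

open scoped ENNReal

namespace MeasureTheory

variable {Ω : Type*} {m m0 : MeasurableSpace Ω} {μ : Measure Ω} {f : Ω → ℝ}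

lemma trim_withDensity_ofReal_condExp (hm : m ≤ m0) [SigmaFinite (μ.trim hm)]
    (hf : Integrable f μ) (hf_nn : 0 ≤ᵐ[μ] f) :
    (μ.withDensity fun ω => ENNReal.ofReal (μ[f|m] ω)).trim hm =
      (μ.withDensity fun ω => ENNReal.ofReal (f ω)).trim hm := by
  refine @Measure.ext _ m _ _ fun A hA => ?_
  rw [trim_measurableSet_eq hm hA, trim_measurableSet_eq hm hA,
    withDensity_apply _ (hm A hA), withDensity_apply _ (hm A hA),
    ← ofReal_integral_eq_lintegral_ofReal integrable_condExp.integrableOn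
      (ae_restrict_of_ae (condExp_nonneg hf_nn)),
    ← ofReal_integral_eq_lintegral_ofReal hf.integrableOn (ae_restrict_of_ae hf_nn),
    setIntegral_condExp hm hf hA]

lemma lintegral_ofReal_condExp_mul (hm : m ≤ m0) [SigmaFinite (μ.trim hm)]
    (hf : Integrable f μ) (hf_nn : 0 ≤ᵐ[μ] f) {h : Ω → ℝ≥0∞} (hh : Measurable[m] h) :
    ∫⁻ ω, ENNReal.ofReal (μ[f|m] ω) * h ω ∂μ = ∫⁻ ω, ENNReal.ofReal (f ω) * h ω ∂μ := by
  have hh' : AEMeasurable h μ := (hh.mono hm le_rfl).aemeasurable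
  have h₁ := lintegral_withDensity_eq_lintegral_mul₀
    (integrable_condExp (m := m) (f := f)).aemeasurable.ennreal_ofReal hh'
  have h₂ := lintegral_withDensity_eq_lintegral_mul₀ hf.aemeasurable.ennreal_ofReal hh'
  simp only [Pi.mul_apply] at h₁ h₂
  rw [← h₁, ← h₂, ← lintegral_trim hm hh, ← lintegral_trim hm hh,
    trim_withDensity_ofReal_condExp hm hf hf_nn]

lemma condExp_pos (hm : m ≤ m0) [SigmaFinite (μ.trim hm)]
    (hf : Integrable f μ) (hf_pos : ∀ᵐ ω ∂μ, 0 < f ω) : ∀ᵐ ω ∂μ, 0 < μ[f|m] ω := by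
  set A := {ω | μ[f|m] ω ≤ 0}
  have hA : MeasurableSet[m] A :=
    measurableSet_le stronglyMeasurable_condExp.measurable measurable_const
  have hA_null : ∫⁻ ω, ENNReal.ofReal (f ω) * A.indicator (fun _ => 1) ω ∂μ = 0 := by
    rw [← lintegral_ofReal_condExp_mul hm hf (hf_pos.mono fun _ h => h.le)
      (measurable_const.indicator hA)]
    refine lintegral_eq_zero_of_ae_eq_zero (ae_of_all _ fun ω => ?_)
    by_cases hω : ω ∈ A
    · simp [ENNReal.ofReal_eq_zero.2 hω]
    · simp [hω]
  have hA_ae := (lintegral_eq_zero_iff' (hf.aemeasurable.ennreal_ofReal.mul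
    ((measurable_const.indicator (hm A hA)).aemeasurable))).1 hA_null
  filter_upwards [hA_ae, hf_pos] with ω hω hfω
  by_contra hω_mem
  have hωA : ω ∈ A := not_lt.1 hω_mem
  exact hfω.not_ge (by simpa [hωA] using hω)

lemma trim_withDensity_condExp_div_condExp {m' : MeasurableSpace Ω} (hm : m ≤ m')
    (hm' : m' ≤ m0) [IsFiniteMeasure μ] (hf : Integrable f μ) (hf_pos : ∀ᵐ ω ∂μ, 0 < f ω) :
    (μ.withDensity fun ω => ENNReal.ofReal (μ[f|m'] ω / μ[f|m] ω)).trim (hm.trans hm') =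
      μ.trim (hm.trans hm') := by
  have hm₀ := hm.trans hm'
  have hfm_pos := condExp_pos hm₀ hf hf_pos
  refine @Measure.ext _ m _ _ fun A hA => ?_
  have hh : Measurable[m] (A.indicator fun ω => ENNReal.ofReal (μ[f|m] ω)⁻¹) :=
    stronglyMeasurable_condExp.measurable.inv.ennreal_ofReal.indicator hA
  rw [trim_measurableSet_eq hm₀ hA, trim_measurableSet_eq hm₀ hA, withDensity_apply _ (hm₀ A hA)]
  calc ∫⁻ ω in A, ENNReal.ofReal (μ[f|m'] ω / μ[f|m] ω) ∂μ
      = ∫⁻ ω, ENNReal.ofReal (μ[f|m'] ω) *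
          A.indicator (fun ω => ENNReal.ofReal (μ[f|m] ω)⁻¹) ω ∂μ := by
        rw [← lintegral_indicator (hm₀ A hA)]
        refine lintegral_congr_ae ?_
        filter_upwards [hfm_pos] with ω hω
        by_cases hωA : ω ∈ A
        · simp [hωA, div_eq_mul_inv, ENNReal.ofReal_mul' (inv_nonneg.2 hω.le)]
        · simp [hωA]
    _ = ∫⁻ ω, ENNReal.ofReal (μ[μ[f|m']|m] ω) *
          A.indicator (fun ω => ENNReal.ofReal (μ[f|m] ω)⁻¹) ω ∂μ :=
        (lintegral_ofReal_condExp_mul hm₀ integrable_condExp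
          (condExp_nonneg (hf_pos.mono fun _ h => h.le)) hh).symm
    _ = ∫⁻ ω, A.indicator 1 ω ∂μ := by
        refine lintegral_congr_ae ?_
        filter_upwards [condExp_condExp_of_le (μ := μ) (f := f) hm hm', hfm_pos] with ω htower hω
        by_cases hωA : ω ∈ A
        · simp [hωA, htower, ← ENNReal.ofReal_mul hω.le, hω.ne']
        · simp [hωA]
    _ = μ A := lintegral_indicator_one (hm₀ A hA)

lemma condExp_div_condExp_nonneg {m' : MeasurableSpace Ω} (hf_nn : 0 ≤ᵐ[μ] f) :
    0 ≤ᵐ[μ] fun ω => μ[f|m'] ω / μ[f|m] ω := by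
  filter_upwards [condExp_nonneg (m := m') hf_nn, condExp_nonneg (m := m) hf_nn] with ω h' h
  exact div_nonneg h' h

lemma toReal_rnDeriv_pos {ν : Measure Ω} [SigmaFinite μ] [SigmaFinite ν]
    (hμν : μ ≪ ν) : ∀ᵐ ω ∂μ, 0 < (ν.rnDeriv μ ω).toReal := by
  filter_upwards [Measure.rnDeriv_pos' hμν, Measure.rnDeriv_lt_top ν μ] with ω hpos hlt
  exact ENNReal.toReal_pos hpos.ne' hlt.ne

section TrimEq

variable {ν : Measure Ω}

lemma measure_eq_of_trim_eq (hm : m ≤ m0) (htrim : ν.trim hm = μ.trim hm) {A : Set Ω}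
    (hA : MeasurableSet[m] A) : ν A = μ A := by
  rw [← trim_measurableSet_eq hm hA, htrim, trim_measurableSet_eq hm hA]

lemma isFiniteMeasure_of_trim_eq (hm : m ≤ m0) (htrim : ν.trim hm = μ.trim hm)
    [IsFiniteMeasure μ] : IsFiniteMeasure ν :=
  ⟨(measure_eq_of_trim_eq hm htrim MeasurableSet.univ).trans_lt (measure_lt_top μ _)⟩

lemma integrable_iff_of_trim_eq (hm : m ≤ m0) (htrim : ν.trim hm = μ.trim hm) {g : Ω → ℝ}
    (hg : StronglyMeasurable[m] g) : Integrable g ν ↔ Integrable g μ :=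
  ⟨fun h => integrable_of_integrable_trim hm (htrim ▸ h.trim hm hg),
    fun h => integrable_of_integrable_trim hm (htrim ▸ h.trim hm hg)⟩

lemma setIntegral_eq_of_trim_eq (hm : m ≤ m0) (htrim : ν.trim hm = μ.trim hm) {g : Ω → ℝ}
    (hg : StronglyMeasurable[m] g) {A : Set Ω} (hA : MeasurableSet[m] A) :
    ∫ ω in A, g ω ∂ν = ∫ ω in A, g ω ∂μ := by
  rw [setIntegral_trim hm hg hA, htrim, ← setIntegral_trim hm hg hA]

lemma condExp_toReal_rnDeriv_ae_eq_one (hm : m ≤ m0) (htrim : ν.trim hm = μ.trim hm)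
    [IsFiniteMeasure μ] (hνμ : ν ≪ μ) :
    μ[fun ω => (ν.rnDeriv μ ω).toReal | m] =ᵐ[μ] fun _ => (1 : ℝ) := by
  have := isFiniteMeasure_of_trim_eq hm htrim
  refine (ae_eq_condExp_of_forall_setIntegral_eq hm Measure.integrable_toReal_rnDeriv
    (fun A _ _ => integrableOn_const) (fun A hA _ => ?_)
    stronglyMeasurable_const.aestronglyMeasurable).symm
  rw [Measure.setIntegral_toReal_rnDeriv hνμ, setIntegral_const, smul_eq_mul, mul_one,
    measureReal_def, measureReal_def, measure_eq_of_trim_eq hm htrim hA]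

lemma condExp_withDensity_ae_eq_condExp_mul (hm : m ≤ m0) [IsFiniteMeasure μ] {d : Ω → ℝ}
    (hd : Measurable d) (hd_nn : 0 ≤ᵐ[μ] d)
    (htrim : (μ.withDensity fun ω => ENNReal.ofReal (d ω)).trim hm = μ.trim hm) (ξ : Ω → ℝ) :
    (μ.withDensity fun ω => ENNReal.ofReal (d ω))[ξ|m] =ᵐ[μ] μ[fun ω => ξ ω * d ω|m] := by
  set ν := μ.withDensity fun ω => ENNReal.ofReal (d ω)
  have := isFiniteMeasure_of_trim_eq hm htrim
  have hd_toReal : ∀ᵐ ω ∂μ, (ENNReal.ofReal (d ω)).toReal = d ω := by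
    filter_upwards [hd_nn] with ω hω using ENNReal.toReal_ofReal hω
  have hξ_iff : Integrable ξ ν ↔ Integrable (fun ω => ξ ω * d ω) μ := by
    rw [integrable_withDensity_iff hd.ennreal_ofReal (ae_of_all _ fun _ => ENNReal.ofReal_lt_top)]
    exact integrable_congr (by filter_upwards [hd_toReal] with ω hω; rw [hω])
  by_cases hξ : Integrable ξ ν
  swap
  · rw [condExp_of_not_integrable hξ, condExp_of_not_integrable (hξ_iff.not.1 hξ)]
  refine ae_eq_condExp_of_forall_setIntegral_eq hm (hξ_iff.1 hξ)
    (fun A _ _ => ((integrable_iff_of_trim_eq hm htrim stronglyMeasurable_condExp).1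
      integrable_condExp).integrableOn)
    (fun A hA _ => ?_) stronglyMeasurable_condExp.aestronglyMeasurable
  calc ∫ ω in A, ν[ξ|m] ω ∂μ = ∫ ω in A, ν[ξ|m] ω ∂ν :=
        (setIntegral_eq_of_trim_eq hm htrim stronglyMeasurable_condExp hA).symm
    _ = ∫ ω in A, ξ ω ∂ν := setIntegral_condExp hm hξ hA
    _ = ∫ ω in A, ξ ω * d ω ∂μ := by
        rw [setIntegral_withDensity_eq_setIntegral_toReal_smul₀
          hd.ennreal_ofReal.aemeasurable (ae_of_all _ fun _ => ENNReal.ofReal_lt_top) _ (hm A hA)]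
        refine setIntegral_congr_ae (hm A hA) ?_
        filter_upwards [hd_toReal] with ω hω _
        rw [hω, smul_eq_mul, mul_comm]

end TrimEq

end MeasureTheory

theorem stmt4_general {Ω : Type*} {m0 : MeasurableSpace Ω} (ℱ : Filtration ℕ m0)
    (M : Set (Measure Ω))
    (hprob : ∀ P ∈ M, IsProbabilityMeasure P)
    (hequiv : ∀ P ∈ M, ∀ Q ∈ M, P ≪ Q)
    (Q : Measure Ω) (hQ : Q ∈ M) (P : Measure Ω) (hP : P ∈ M)
    (n s k : ℕ) (hns : n ≤ s) (hsk : s ≤ k)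
    (ξ : Ω → ℝ) :
    ((Rmeas ℱ Q P s k)[ξ | ℱ n] =ᵐ[Q]
      Q[fun ω => ξ ω * ((Q[fun ω' => (P.rnDeriv Q ω').toReal | ℱ k]) ω /
          (Q[fun ω' => (P.rnDeriv Q ω').toReal | ℱ s]) ω) | ℱ n]) ∧
    (Q[fun ω => ((Rmeas ℱ Q P s k).rnDeriv Q ω).toReal | ℱ n] =ᵐ[Q]
      fun _ => (1 : ℝ)) := by
  have := hprob Q hQ
  have := hprob P hP
  have htrim_s : (Rmeas ℱ Q P s k).trim (ℱ.le s) = Q.trim (ℱ.le s) :=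
    trim_withDensity_condExp_div_condExp (ℱ.mono hsk) (ℱ.le k) Measure.integrable_toReal_rnDeriv
      (toReal_rnDeriv_pos (hequiv Q hQ P hP))
  have htrim_n : (Rmeas ℱ Q P s k).trim (ℱ.le n) = Q.trim (ℱ.le n) := by
    rw [← trim_trim (hm₁₂ := ℱ.mono hns) (hm₂ := ℱ.le s), htrim_s, trim_trim]
  have hd_meas : Measurable fun ω => (Q[fun ω' => (P.rnDeriv Q ω').toReal | ℱ k]) ω /
      (Q[fun ω' => (P.rnDeriv Q ω').toReal | ℱ s]) ω :=
    (stronglyMeasurable_condExp.mono (ℱ.le k)).measurable.div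
      (stronglyMeasurable_condExp.mono (ℱ.le s)).measurable
  exact ⟨condExp_withDensity_ae_eq_condExp_mul (ℱ.le n) hd_meas
      (condExp_div_condExp_nonneg (ae_of_all _ fun _ => ENNReal.toReal_nonneg)) htrim_n ξ,
    condExp_toReal_rnDeriv_ae_eq_one (ℱ.le n) htrim_n (withDensity_absolutelyContinuous _ _)⟩

theorem stmt4 {Ω : Type*} {m0 : MeasurableSpace Ω} (ℱ : Filtration ℕ m0)
    (M : Set (Measure Ω))
    (hprob : ∀ P ∈ M, IsProbabilityMeasure P)
    (hequiv : ∀ P ∈ M, ∀ Q ∈ M, P ≪ Q)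
    (hcons : ConsistentWithFiltration ℱ M)
    (Q : Measure Ω) (hQ : Q ∈ M) (P : Measure Ω) (hP : P ∈ M)
    (n s k : ℕ) (hns : n ≤ s) (hsk : s ≤ k)
    (ξ : Ω → ℝ) (hmeas : Measurable ξ) (hpos : ∀ ω, 0 ≤ ξ ω)
    (hbdd : ∃ C : ℝ, ∀ P' ∈ M, ∫ ω, ξ ω ∂P' ≤ C) :
    ((Rmeas ℱ Q P s k)[ξ | ℱ n] =ᵐ[Q]
      Q[fun ω => ξ ω * ((Q[fun ω' => (P.rnDeriv Q ω').toReal | ℱ k]) ω /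
          (Q[fun ω' => (P.rnDeriv Q ω').toReal | ℱ s]) ω) | ℱ n]) ∧
    (Q[fun ω => ((Rmeas ℱ Q P s k).rnDeriv Q ω).toReal | ℱ n] =ᵐ[Q]
      fun _ => (1 : ℝ)) :=
  stmt4_general ℱ M hprob hequiv Q hQ P hP n s k hns hsk ξ
end

section
/- Let $(\Omega, \mathcal{F}, P)$ be a probability space and $\xi$ an integrable random variable with $0 < P(\xi > 0) < 1$ and $0 < P(\xi < 0)$. Set $\Omega^+ = \{\xi > 0\}$, $\Omega^- = \{\xi \le 0\}$, $\xi^\pm$ the positive/negative parts, and $\mu = P^- \times P^+$ the product of the restrictions of $P$. Then a probability measure $Q$ equivalent to $P$ satisfies $E^Q \xi = 0$ if and only if $Q$ has the representation $Q(A) = \int_{\Omega^-}\int_{\Omega^+} \left[\chi_A(\omega_1) \frac{\xi^+(\omega_2)}{\xi^-(\omega_1)+\xi^+(\omega_2)} + \chi_A(\omega_2) \frac{\xi^-(\omega_1)}{\xi^-(\omega_1)+\xi^+(\omega_2)}\right] \alpha(\omega_1, \omega_2) \, d\mu(\omega_1, \omega_2)$ for some nonnegative measurable $\alpha$ on $\Omega^-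 \times \Omega^+$ with $\mu(\alpha > 0) = P(\Omega^+)P(\Omega^-)$, $\int \alpha \frac{\xi^- \xi^+}{\xi^- + \xi^+} d\mu < \infty$, and $\int \alpha \, d\mu = 1$. -/
open MeasureTheory Filter

noncomputable def xiPos {Ω : Type*} (ξ : Ω → ℝ) (ω : Ω) : ℝ := max (ξ ω) 0

noncomputable def xiNeg {Ω : Type*} (ξ : Ω → ℝ) (ω : Ω) : ℝ := max (-ξ ω) 0

/-- The product `μ = P⁻ × P⁺` of the restrictions of `P` to `Ω⁻ = {ξ ≤ 0}` and
`Ω⁺ = {ξ > 0}`. -/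
noncomputable def prodMeas {Ω : Type*} [MeasurableSpace Ω] (P : Measure Ω) (ξ : Ω → ℝ) :
    Measure (Ω × Ω) :=
  (P.restrict {ω | ξ ω ≤ 0}).prod (P.restrict {ω | 0 < ξ ω})

/-- The kernel `χ_S(ω₁) ξ⁺(ω₂)/(ξ⁻(ω₁)+ξ⁺(ω₂)) + χ_S(ω₂) ξ⁻(ω₁)/(ξ⁻(ω₁)+ξ⁺(ω₂))`. -/
noncomputable def kern {Ω : Type*} (ξ : Ω → ℝ) (S : Set Ω) (p : Ω × Ω) : ℝ :=
  Set.indicator S (fun _ => (1 : ℝ)) p.1 * (xiPos ξ p.2 / (xiNeg ξ p.1 + xiPos ξ p.2)) +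
  Set.indicator S (fun _ => (1 : ℝ)) p.2 * (xiNeg ξ p.1 / (xiNeg ξ p.1 + xiPos ξ p.2))

/-- The admissibility conditions on the weight `α`. -/
def GoodAlpha {Ω : Type*} [MeasurableSpace Ω] (P : Measure Ω) (ξ : Ω → ℝ)
    (α : Ω × Ω → ℝ) : Prop :=
  Measurable α ∧ (∀ p, 0 ≤ α p) ∧
  prodMeas P ξ {p | 0 < α p} = P {ω | 0 < ξ ω} * P {ω | ξ ω ≤ 0} ∧
  Integrable (fun p => α p * (xiNeg ξ p.1 * xiPos ξ p.2 / (xiNeg ξ p.1 + xiPos ξ p.2)))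
    (prodMeas P ξ) ∧
  ∫ p, α p ∂(prodMeas P ξ) = 1

/-!
If `E^Q ξ = 0`, let `g = dQ/dP` and `c = E^Q ξ⁺ = E^Q ξ⁻ > 0`. The weight
`α(ω₁, ω₂) = g(ω₁) g(ω₂) (ξ⁻(ω₁) + ξ⁺(ω₂)) / c` works: `α · kern_S` is the sum of the
products `(g χ_S)(ω₁) (g ξ⁺ / c)(ω₂)` and `(g ξ⁻ / c)(ω₁) (g χ_S)(ω₂)`, whose `μ`-integrals are
`Q(S ∩ Ω⁻)` and `Q(S ∩ Ω⁺)`. Taking `S = Ω` gives `∫ α dμ = 1`, and `α > 0` wherever `g > 0`,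
that is `μ`-a.e.

Conversely, the representation says that `Q` is the first marginal of `α ξ⁺/(ξ⁻ + ξ⁺) · μ` plus
the second marginal of `α ξ⁻/(ξ⁻ + ξ⁺) · μ`. Since `ξ = -ξ⁻` on `Ω⁻` and `ξ = ξ⁺` on `Ω⁺`, the
two marginals contribute `∓ ∫ α ξ⁻ ξ⁺/(ξ⁻ + ξ⁺) dμ` to `E^Q ξ`, which cancel.
-/

lemma norm_div_le_one_of_le {x y : ℝ} (hx : 0 ≤ x) (hxy : x ≤ y) : ‖x / y‖ ≤ 1 := by
  rw [Real.norm_of_nonneg (div_nonneg hx (hx.trans hxy))]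
  exact div_le_one_of_le₀ hxy (hx.trans hxy)

section PushforwardWithDensity

variable {α β : Type*} [MeasurableSpace α] [MeasurableSpace β] {μ : Measure α} {r : α → ℝ}
  {φ : α → β}

lemma map_withDensity_ofReal_apply (hφ : Measurable φ) (hr : Integrable r μ) (hr0 : 0 ≤ᵐ[μ] r)
    {S : Set β} (hS : MeasurableSet S) :
    (μ.withDensity fun a => ENNReal.ofReal (r a)).map φ S =
      ENNReal.ofReal (∫ a in φ ⁻¹' S, r a ∂μ) := by
  rw [Measure.map_apply hφ hS, withDensity_apply _ (hφ hS),
    ofReal_integral_eq_lintegral_ofReal hr.restrict (ae_restrict_of_ae hr0)]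

lemma integral_map_withDensity_ofReal (hφ : Measurable φ) (hr : AEMeasurable r μ)
    (hr0 : 0 ≤ᵐ[μ] r) {f : β → ℝ} (hf : Measurable f) :
    ∫ b, f b ∂(μ.withDensity fun a => ENNReal.ofReal (r a)).map φ = ∫ a, r a * f (φ a) ∂μ := by
  rw [integral_map hφ.aemeasurable hf.aestronglyMeasurable,
    integral_withDensity_eq_integral_toReal_smul₀ hr.ennreal_ofReal
      (ae_of_all _ fun _ => ENNReal.ofReal_lt_top)]
  refine integral_congr_ae ?_
  filter_upwards [hr0] with a ha
  rw [ENNReal.toReal_ofReal ha, smul_eq_mul]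

end PushforwardWithDensity

section TwoMarginals

variable {X : Type*} [MeasurableSpace X] {μ : Measure (X × X)} {Q : Measure X}
  [IsFiniteMeasure Q] {r₁ r₂ : X × X → ℝ}

lemma eq_map_fst_withDensity_add_map_snd_withDensity (hr₁ : Integrable r₁ μ)
    (hr₂ : Integrable r₂ μ) (hr₁0 : 0 ≤ᵐ[μ] r₁) (hr₂0 : 0 ≤ᵐ[μ] r₂)
    (hQ : ∀ S, MeasurableSet S →
      Q.real S = ∫ p in Prod.fst ⁻¹' S, r₁ p ∂μ + ∫ p in Prod.snd ⁻¹' S, r₂ p ∂μ) :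
    Q = (μ.withDensity fun p => ENNReal.ofReal (r₁ p)).map Prod.fst +
      (μ.withDensity fun p => ENNReal.ofReal (r₂ p)).map Prod.snd := by
  ext S hS
  rw [Measure.add_apply, map_withDensity_ofReal_apply measurable_fst hr₁ hr₁0 hS,
    map_withDensity_ofReal_apply measurable_snd hr₂ hr₂0 hS,
    ← ENNReal.ofReal_add (setIntegral_nonneg_of_ae_restrict (ae_restrict_of_ae hr₁0))
      (setIntegral_nonneg_of_ae_restrict (ae_restrict_of_ae hr₂0)), ← hQ S hS,
    ofReal_measureReal]

lemma integral_eq_integral_fst_add_integral_snd (hr₁ : Integrable r₁ μ)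
    (hr₂ : Integrable r₂ μ) (hr₁0 : 0 ≤ᵐ[μ] r₁) (hr₂0 : 0 ≤ᵐ[μ] r₂)
    (hQ : ∀ S, MeasurableSet S →
      Q.real S = ∫ p in Prod.fst ⁻¹' S, r₁ p ∂μ + ∫ p in Prod.snd ⁻¹' S, r₂ p ∂μ)
    {f : X → ℝ} (hf : Measurable f) (hfQ : Integrable f Q) :
    ∫ x, f x ∂Q = ∫ p, r₁ p * f p.1 ∂μ + ∫ p, r₂ p * f p.2 ∂μ := by
  rw [eq_map_fst_withDensity_add_map_snd_withDensity hr₁ hr₂ hr₁0 hr₂0 hQ] at hfQ ⊢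
  obtain ⟨hf₁, hf₂⟩ := integrable_add_measure.1 hfQ
  rw [integral_add_measure hf₁ hf₂,
    integral_map_withDensity_ofReal measurable_fst hr₁.aemeasurable hr₁0 hf,
    integral_map_withDensity_ofReal measurable_snd hr₂.aemeasurable hr₂0 hf]

end TwoMarginals

section PosNegParts

variable {Ω : Type*} {ξ : Ω → ℝ}

lemma xiPos_nonneg (ξ : Ω → ℝ) (ω : Ω) : 0 ≤ xiPos ξ ω := le_max_right _ _

lemma xiNeg_nonneg (ξ : Ω → ℝ) (ω : Ω) : 0 ≤ xiNeg ξ ω := le_max_right _ _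

lemma xiPos_eq_of_pos {ω : Ω} (h : 0 < ξ ω) : xiPos ξ ω = ξ ω := max_eq_left h.le

lemma xiPos_eq_zero_of_nonpos {ω : Ω} (h : ξ ω ≤ 0) : xiPos ξ ω = 0 := max_eq_right h

lemma xiNeg_eq_of_nonpos {ω : Ω} (h : ξ ω ≤ 0) : xiNeg ξ ω = -ξ ω :=
  max_eq_left (neg_nonneg.2 h)

lemma xiNeg_eq_zero_of_pos {ω : Ω} (h : 0 < ξ ω) : xiNeg ξ ω = 0 :=
  max_eq_right (neg_nonpos.2 h.le)

lemma support_xiPos : Function.support (xiPos ξ) = {ω | 0 < ξ ω} := by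
  ext ω
  simp [xiPos]

lemma add_mul_kern (S : Set Ω) (p : Ω × Ω) :
    (xiNeg ξ p.1 + xiPos ξ p.2) * kern ξ S p =
      S.indicator (fun _ => (1 : ℝ)) p.1 * xiPos ξ p.2 +
        S.indicator (fun _ => (1 : ℝ)) p.2 * xiNeg ξ p.1 := by
  have ha := xiNeg_nonneg ξ p.1
  have hb := xiPos_nonneg ξ p.2
  rcases (add_nonneg ha hb).eq_or_lt with h | h
  · obtain ⟨ha0, hb0⟩ : xiNeg ξ p.1 = 0 ∧ xiPos ξ p.2 = 0 := ⟨by linarith, by linarith⟩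
    simp [ha0, hb0]
  · unfold kern
    field_simp

lemma kern_univ_of_pos {p : Ω × Ω} (h : 0 < ξ p.2) : kern ξ Set.univ p = 1 := by
  have hab : 0 < xiNeg ξ p.1 + xiPos ξ p.2 := by
    rw [xiPos_eq_of_pos h]
    linarith [xiNeg_nonneg ξ p.1]
  unfold kern
  simp only [Set.indicator_univ, one_mul]
  rw [← add_div, add_comm, div_self hab.ne']

end PosNegParts

section Measurability

variable {Ω : Type*} [MeasurableSpace Ω] {ξ : Ω → ℝ}

lemma measurable_xiPos (hξ : Measurable ξ) : Measurable (xiPos ξ) :=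
  hξ.max measurable_const

lemma measurable_xiNeg (hξ : Measurable ξ) : Measurable (xiNeg ξ) :=
  hξ.neg.max measurable_const

lemma integrable_xiPos {μ : Measure Ω} (h : Integrable ξ μ) : Integrable (xiPos ξ) μ :=
  h.pos_part

lemma integrable_xiNeg {μ : Measure Ω} (h : Integrable ξ μ) : Integrable (xiNeg ξ) μ :=
  h.neg_part

lemma ae_prodMeas_of_ae {P : Measure Ω} [IsFiniteMeasure P] {q : Ω → Prop}
    (h : ∀ᵐ ω ∂P, q ω) : ∀ᵐ p ∂prodMeas P ξ, q p.1 ∧ q p.2 :=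
  (Measure.quasiMeasurePreserving_fst.ae (ae_restrict_of_ae h)).and
    (Measure.quasiMeasurePreserving_snd.ae (ae_restrict_of_ae h))

lemma ae_prodMeas_fst_nonpos_snd_pos (P : Measure Ω) [IsFiniteMeasure P] (hξ : Measurable ξ) :
    ∀ᵐ p ∂prodMeas P ξ, ξ p.1 ≤ 0 ∧ 0 < ξ p.2 :=
  (Measure.quasiMeasurePreserving_fst.ae (ae_restrict_mem (hξ measurableSet_Iic))).and
    (Measure.quasiMeasurePreserving_snd.ae (ae_restrict_mem (hξ measurableSet_Ioi)))

end Measurability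

section Necessity

variable {Ω : Type*} [MeasurableSpace Ω] {P Q : Measure Ω} {ξ : Ω → ℝ}

noncomputable def rnWeight (P Q : Measure Ω) (ξ : Ω → ℝ) (p : Ω × Ω) : ℝ :=
  (Q.rnDeriv P p.1).toReal * (Q.rnDeriv P p.2).toReal / (∫ ω, xiPos ξ ω ∂Q) *
    (xiNeg ξ p.1 + xiPos ξ p.2)

lemma measurable_rnWeight (hξ : Measurable ξ) : Measurable (rnWeight P Q ξ) :=
  ((((Q.measurable_rnDeriv P).ennreal_toReal.comp measurable_fst).mul
      ((Q.measurable_rnDeriv P).ennreal_toReal.comp measurable_snd)).div_const _).mul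
    (((measurable_xiNeg hξ).comp measurable_fst).add ((measurable_xiPos hξ).comp measurable_snd))

lemma rnWeight_nonneg (p : Ω × Ω) : 0 ≤ rnWeight P Q ξ p := by
  have : 0 ≤ ∫ ω, xiPos ξ ω ∂Q := integral_nonneg (xiPos_nonneg ξ)
  have := xiNeg_nonneg ξ p.1
  have := xiPos_nonneg ξ p.2
  unfold rnWeight
  positivity

lemma integral_xiNeg_eq_integral_xiPos (hint : Integrable ξ Q) (hQ0 : ∫ ω, ξ ω ∂Q = 0) :
    ∫ ω, xiNeg ξ ω ∂Q = ∫ ω, xiPos ξ ω ∂Q := by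
  have h := integral_sub hint.pos_part hint.neg_part
  simp only [max_zero_sub_max_neg_zero_eq_self, hQ0] at h
  exact (sub_eq_zero.1 h.symm).symm

lemma integral_xiPos_pos (hPQ : P ≪ Q) (hint : Integrable ξ Q) (h1 : 0 < P {ω | 0 < ξ ω}) :
    0 < ∫ ω, xiPos ξ ω ∂Q := by
  rw [integral_pos_iff_support_of_nonneg (xiPos_nonneg ξ) (integrable_xiPos hint), support_xiPos]
  exact pos_iff_ne_zero.2 fun h => h1.ne' (hPQ h)

variable [IsFiniteMeasure P] [IsFiniteMeasure Q]

lemma integrable_toReal_rnDeriv_mul_restrict (hQP : Q ≪ P) {f : Ω → ℝ} (hf : Integrable f Q)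
    {s : Set Ω} : Integrable (fun ω => (Q.rnDeriv P ω).toReal * f ω) (P.restrict s) :=
  ((integrable_toReal_rnDeriv_mul_iff hQP).2 hf).restrict

lemma integral_rnWeight_mul_kern (hQP : Q ≪ P) (hξ : Measurable ξ) (hint : Integrable ξ Q)
    (hQ0 : ∫ ω, ξ ω ∂Q = 0) (hc : ∫ ω, xiPos ξ ω ∂Q ≠ 0) {S : Set Ω} (hS : MeasurableSet S) :
    ∫ p, rnWeight P Q ξ p * kern ξ S p ∂prodMeas P ξ = Q.real S := by
  set c := ∫ ω, xiPos ξ ω ∂Q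
  set χ := S.indicator (fun _ => (1 : ℝ))
  have hg {f : Ω → ℝ} (hf : Integrable f Q) {s : Set Ω} :=
    integrable_toReal_rnDeriv_mul_restrict (s := s) hQP hf
  have hfun : (fun p => rnWeight P Q ξ p * kern ξ S p) = fun p =>
      ((Q.rnDeriv P p.1).toReal * χ p.1) * ((Q.rnDeriv P p.2).toReal * (xiPos ξ p.2 / c)) +
        ((Q.rnDeriv P p.1).toReal * (xiNeg ξ p.1 / c)) * ((Q.rnDeriv P p.2).toReal * χ p.2) := by
    funext p
    rw [rnWeight, mul_assoc, add_mul_kern]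
    ring
  have hpos : ∫ ω in {ω | 0 < ξ ω}, xiPos ξ ω / c ∂Q = 1 := by
    rw [setIntegral_eq_integral_of_forall_compl_eq_zero, integral_div, div_self hc]
    intro ω hω
    rw [xiPos_eq_zero_of_nonpos (not_lt.1 hω), zero_div]
  have hneg : ∫ ω in {ω | ξ ω ≤ 0}, xiNeg ξ ω / c ∂Q = 1 := by
    rw [setIntegral_eq_integral_of_forall_compl_eq_zero, integral_div,
      integral_xiNeg_eq_integral_xiPos hint hQ0, div_self hc]
    intro ω hω
    rw [xiNeg_eq_zero_of_pos (not_le.1 hω), zero_div]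
  have hsplit : S ∩ {ω | 0 < ξ ω} = S \ {ω | ξ ω ≤ 0} := by
    ext ω
    simp
  have hχ : Integrable χ Q := (integrable_const 1).indicator hS
  rw [hfun, prodMeas, integral_add ((hg hχ).mul_prod (hg ((integrable_xiPos hint).div_const c)))
      ((hg ((integrable_xiNeg hint).div_const c)).mul_prod (hg hχ)),
    integral_prod_mul (fun ω => (Q.rnDeriv P ω).toReal * χ ω)
      fun ω => (Q.rnDeriv P ω).toReal * (xiPos ξ ω / c),
    integral_prod_mul (fun ω => (Q.rnDeriv P ω).toReal * (xiNeg ξ ω / c))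
      fun ω => (Q.rnDeriv P ω).toReal * χ ω]
  simp only [setIntegral_toReal_rnDeriv_mul' hQP, hpos, hneg, χ,
    integral_indicator_const _ hS, measureReal_restrict_apply hS, smul_eq_mul, mul_one, one_mul]
  rw [hsplit]
  exact measureReal_inter_add_sdiff (hξ measurableSet_Iic)

lemma ae_rnWeight_pos (hPQ : P ≪ Q) (hξ : Measurable ξ) (hc : 0 < ∫ ω, xiPos ξ ω ∂Q) :
    ∀ᵐ p ∂prodMeas P ξ, 0 < rnWeight P Q ξ p := by
  have hg : ∀ᵐ ω ∂P, 0 < (Q.rnDeriv P ω).toReal := by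
    filter_upwards [Measure.rnDeriv_pos' hPQ, Measure.rnDeriv_lt_top Q P]
      with ω h0 htop
    exact ENNReal.toReal_pos h0.ne' htop.ne
  filter_upwards [ae_prodMeas_of_ae hg, ae_prodMeas_fst_nonpos_snd_pos P hξ] with p ⟨hg₁, hg₂⟩ hp
  have hab : 0 < xiNeg ξ p.1 + xiPos ξ p.2 := by
    rw [xiPos_eq_of_pos hp.2]
    linarith [xiNeg_nonneg ξ p.1]
  exact mul_pos (div_pos (mul_pos hg₁ hg₂) hc) hab

lemma integrable_rnWeight_mul (hQP : Q ≪ P) (hint : Integrable ξ Q) :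
    Integrable (fun p => rnWeight P Q ξ p *
      (xiNeg ξ p.1 * xiPos ξ p.2 / (xiNeg ξ p.1 + xiPos ξ p.2))) (prodMeas P ξ) := by
  set c := ∫ ω, xiPos ξ ω ∂Q
  have hfun : (fun p => rnWeight P Q ξ p *
      (xiNeg ξ p.1 * xiPos ξ p.2 / (xiNeg ξ p.1 + xiPos ξ p.2))) = fun p =>
        ((Q.rnDeriv P p.1).toReal * xiNeg ξ p.1) *
          ((Q.rnDeriv P p.2).toReal * (xiPos ξ p.2 / c)) := by
    funext p
    have hab : xiNeg ξ p.1 + xiPos ξ p.2 = 0 → xiNeg ξ p.1 * xiPos ξ p.2 = 0 := fun h => by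
      simp [((add_eq_zero_iff_of_nonneg (xiNeg_nonneg ξ p.1) (xiPos_nonneg ξ p.2)).1 h).1]
    rw [rnWeight, mul_assoc, mul_comm (xiNeg ξ p.1 + _), div_mul_cancel_of_imp hab]
    ring
  rw [hfun]
  exact (integrable_toReal_rnDeriv_mul_restrict hQP (integrable_xiNeg hint)).mul_prod
    (integrable_toReal_rnDeriv_mul_restrict hQP ((integrable_xiPos hint).div_const c))

lemma integral_rnWeight [IsProbabilityMeasure Q] (hQP : Q ≪ P) (hξ : Measurable ξ)
    (hint : Integrable ξ Q) (hQ0 : ∫ ω, ξ ω ∂Q = 0) (hc : ∫ ω, xiPos ξ ω ∂Q ≠ 0) :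
    ∫ p, rnWeight P Q ξ p ∂prodMeas P ξ = 1 := by
  rw [← probReal_univ (μ := Q),
    ← integral_rnWeight_mul_kern hQP hξ hint hQ0 hc MeasurableSet.univ]
  refine integral_congr_ae ?_
  filter_upwards [ae_prodMeas_fst_nonpos_snd_pos P hξ] with p hp
  rw [kern_univ_of_pos hp.2, mul_one]

lemma exists_goodAlpha_of_integral_eq_zero [IsProbabilityMeasure Q] (hξ : Measurable ξ)
    (h1 : 0 < P {ω | 0 < ξ ω}) (hQP : Q ≪ P) (hPQ : P ≪ Q) (hint : Integrable ξ Q)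
    (hQ0 : ∫ ω, ξ ω ∂Q = 0) :
    ∃ α : Ω × Ω → ℝ, GoodAlpha P ξ α ∧ ∀ S : Set Ω, MeasurableSet S →
      (Q S).toReal = ∫ p, α p * kern ξ S p ∂prodMeas P ξ := by
  have hc := integral_xiPos_pos hPQ hint h1
  refine ⟨rnWeight P Q ξ, ⟨measurable_rnWeight hξ, rnWeight_nonneg, ?_,
    integrable_rnWeight_mul hQP hint, integral_rnWeight hQP hξ hint hQ0 hc.ne'⟩,
    fun S hS => (integral_rnWeight_mul_kern hQP hξ hint hQ0 hc.ne' hS).symm⟩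
  rw [measure_congr (eventuallyEq_univ.2 (ae_rnWeight_pos hPQ hξ hc)), prodMeas,
    ← Set.univ_prod_univ, Measure.prod_prod, Measure.restrict_apply_univ,
    Measure.restrict_apply_univ, mul_comm]

end Necessity




section Sufficiency

variable {Ω : Type*} [MeasurableSpace Ω] {P Q : Measure Ω} [IsFiniteMeasure P]
  [IsFiniteMeasure Q] {ξ : Ω → ℝ}

lemma integral_eq_zero_of_eq_integral_kern (hξ : Measurable ξ) (hint : Integrable ξ Q)
    {α : Ω × Ω → ℝ} (hα0 : ∀ p, 0 ≤ α p) (hαint : Integrable α (prodMeas P ξ))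
    (hrep : ∀ S : Set Ω, MeasurableSet S →
      (Q S).toReal = ∫ p, α p * kern ξ S p ∂prodMeas P ξ) :
    ∫ ω, ξ ω ∂Q = 0 := by
  have hN : Measurable fun p : Ω × Ω => xiNeg ξ p.1 := (measurable_xiNeg hξ).comp measurable_fst
  have hP : Measurable fun p : Ω × Ω => xiPos ξ p.2 := (measurable_xiPos hξ).comp measurable_snd
  set r₁ := fun p : Ω × Ω => α p * (xiPos ξ p.2 / (xiNeg ξ p.1 + xiPos ξ p.2))
  set r₂ := fun p : Ω × Ω => α p * (xiNeg ξ p.1 / (xiNeg ξ p.1 + xiPos ξ p.2))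
  have hr₁ : Integrable r₁ (prodMeas P ξ) :=
    hαint.mul_bdd (hP.div (hN.add hP)).aestronglyMeasurable <| ae_of_all _ fun p =>
      norm_div_le_one_of_le (xiPos_nonneg ξ p.2) (le_add_of_nonneg_left (xiNeg_nonneg ξ p.1))
  have hr₂ : Integrable r₂ (prodMeas P ξ) :=
    hαint.mul_bdd (hN.div (hN.add hP)).aestronglyMeasurable <| ae_of_all _ fun p =>
      norm_div_le_one_of_le (xiNeg_nonneg ξ p.1) (le_add_of_nonneg_right (xiPos_nonneg ξ p.2))
  have hden (p : Ω × Ω) : 0 ≤ xiNeg ξ p.1 + xiPos ξ p.2 :=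
    add_nonneg (xiNeg_nonneg ξ p.1) (xiPos_nonneg ξ p.2)
  have hr₁0 : 0 ≤ᵐ[prodMeas P ξ] r₁ := ae_of_all _ fun p =>
    mul_nonneg (hα0 p) (div_nonneg (xiPos_nonneg ξ p.2) (hden p))
  have hr₂0 : 0 ≤ᵐ[prodMeas P ξ] r₂ := ae_of_all _ fun p =>
    mul_nonneg (hα0 p) (div_nonneg (xiNeg_nonneg ξ p.1) (hden p))
  have hQ : ∀ S, MeasurableSet S → Q.real S =
      ∫ p in Prod.fst ⁻¹' S, r₁ p ∂prodMeas P ξ + ∫ p in Prod.snd ⁻¹' S, r₂ p ∂prodMeas P ξ := by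
    intro S hS
    rw [← integral_indicator (measurable_fst hS), ← integral_indicator (measurable_snd hS),
      ← integral_add (hr₁.indicator (measurable_fst hS)) (hr₂.indicator (measurable_snd hS))]
    refine (hrep S hS).trans (integral_congr_ae (ae_of_all _ fun p => ?_))
    by_cases h₁ : p.1 ∈ S <;> by_cases h₂ : p.2 ∈ S <;> simp [kern, h₁, h₂, r₁, r₂, mul_add]
  have hcancel : (fun p => r₁ p * ξ p.1) =ᵐ[prodMeas P ξ] fun p => -(r₂ p * ξ p.2) := by
    filter_upwards [ae_prodMeas_fst_nonpos_snd_pos P hξ] with p hp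
    have hξ₁ : ξ p.1 = -xiNeg ξ p.1 := by rw [xiNeg_eq_of_nonpos hp.1, neg_neg]
    simp only [r₁, r₂, hξ₁, ← xiPos_eq_of_pos hp.2]
    ring
  rw [integral_eq_integral_fst_add_integral_snd hr₁ hr₂ hr₁0 hr₂0 hQ hξ hint,
    integral_congr_ae hcancel, integral_neg, neg_add_cancel]

end Sufficiency

theorem stmt7_general {Ω : Type*} [MeasurableSpace Ω] (P Q : Measure Ω)
    [IsProbabilityMeasure P] [IsProbabilityMeasure Q]
    (ξ : Ω → ℝ) (hmeas : Measurable ξ)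
    (h1 : 0 < P {ω | 0 < ξ ω})
    (hQP : Q ≪ P) (hPQ : P ≪ Q) (hintQ : Integrable ξ Q) :
    (∫ ω, ξ ω ∂Q = 0) ↔
      ∃ α : Ω × Ω → ℝ, GoodAlpha P ξ α ∧
        ∀ S : Set Ω, MeasurableSet S →
          (Q S).toReal = ∫ p, α p * kern ξ S p ∂(prodMeas P ξ) := by
  refine ⟨exists_goodAlpha_of_integral_eq_zero hmeas h1 hQP hPQ hintQ, ?_⟩
  rintro ⟨α, ⟨-, hα0, -, -, hα1⟩, hrep⟩
  have hαint : Integrable α (prodMeas P ξ) :=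
    .of_integral_ne_zero (by rw [hα1]; exact one_ne_zero)
  exact integral_eq_zero_of_eq_integral_kern hmeas hintQ hα0 hαint hrep

theorem stmt7 {Ω : Type*} [MeasurableSpace Ω] (P Q : Measure Ω)
    [IsProbabilityMeasure P] [IsProbabilityMeasure Q]
    (ξ : Ω → ℝ) (hmeas : Measurable ξ) (hint : Integrable ξ P)
    (h1 : 0 < P {ω | 0 < ξ ω}) (h2 : P {ω | 0 < ξ ω} < 1) (h3 : 0 < P {ω | ξ ω < 0})
    (hQP : Q ≪ P) (hPQ : P ≪ Q) (hintQ : Integrable ξ Q) :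
    (∫ ω, ξ ω ∂Q = 0) ↔
      ∃ α : Ω × Ω → ℝ, GoodAlpha P ξ α ∧
        ∀ S : Set Ω, MeasurableSet S →
          (Q S).toReal = ∫ p, α p * kern ξ S p ∂(prodMeas P ξ) :=
  stmt7_general P Q ξ hmeas h1 hQP hPQ hintQ
end

section
/- Let $\{f_m, \mathcal{F}_m\}_{m=0}^\infty$ be a nonnegative super-martingale relative to a set of equivalent measures $M$. Then $f$ is local regular if and only if there exist $\mathcal{F}_m$-measurable nonnegative random variables $\xi^0_m$ with $E^P\{\xi^0_m \mid \mathcal{F}_{m-1}\} = 1$ for all $P \in M$ and $\frac{f_m}{f_{m-1}} \le \xi^0_m$ for all $m \ge 1$ (assuming $f_m \ge a > 0$ for some constant $a$, or after shifting by a positive constant). -/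
open MeasureTheory Filter

/-!
If `f + g` is a martingale with `g` increasing, the ratio
`ξ (m + 1) = (f (m + 1) + g (m + 1) - g m) / f m` dominates `f (m + 1) / f m`, and pulling the
`ℱ m`-measurable factor `(f m)⁻¹` out of the conditional expectation gives `E[ξ (m + 1) | ℱ m] = 1`.
Conversely, if `f (m + 1) ≤ f m * ξ (m + 1)` with `E[ξ (m + 1) | ℱ m] = 1`, the increments
`f m * ξ (m + 1) - f (m + 1)` are nonnegative and have conditional expectation
`f m - E[f (m + 1) | ℱ m]`, so their partial sums `g` make `f + g` a martingale, and
`∫ g m = ∫ f 0 - ∫ f m ≤ ∫ f 0`. Integrability of `f m * ξ (m + 1)` holds because the measure with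
density `ξ (m + 1)` agrees with the original one on `ℱ m`.
-/

section CondExpEqOne

variable {Ω : Type*} {m m0 : MeasurableSpace Ω} {μ : Measure Ω} [IsFiniteMeasure μ]
  {ξ : Ω → ℝ}

theorem trim_withDensity_ofReal_eq_of_condExp_eq_one (hm : m ≤ m0) (hξ : 0 ≤ᵐ[μ] ξ)
    (hξint : Integrable ξ μ) (hcond : μ[ξ|m] =ᵐ[μ] 1) :
    (μ.withDensity fun ω => ENNReal.ofReal (ξ ω)).trim hm = μ.trim hm := by
  refine @Measure.ext _ m _ _ fun s hs => ?_
  rw [trim_measurableSet_eq hm hs, trim_measurableSet_eq hm hs, withDensity_apply _ (hm s hs),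
    ← ofReal_integral_eq_lintegral_ofReal hξint.integrableOn (ae_restrict_of_ae hξ),
    ← setIntegral_condExp hm hξint hs,
    setIntegral_congr_ae (hm s hs) (hcond.mono fun _ h _ => h)]
  simp [measureReal_def]

theorem lintegral_mul_ofReal_eq_of_condExp_eq_one (hm : m ≤ m0) (hξ : 0 ≤ᵐ[μ] ξ)
    (hξint : Integrable ξ μ) (hcond : μ[ξ|m] =ᵐ[μ] 1) {φ : Ω → ENNReal}
    (hφ : Measurable[m] φ) :
    ∫⁻ ω, φ ω * ENNReal.ofReal (ξ ω) ∂μ = ∫⁻ ω, φ ω ∂μ := by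
  calc ∫⁻ ω, φ ω * ENNReal.ofReal (ξ ω) ∂μ
      = ∫⁻ ω, φ ω ∂(μ.withDensity fun ω => ENNReal.ofReal (ξ ω)).trim hm := by
        rw [lintegral_trim hm hφ, lintegral_withDensity_eq_lintegral_mul₀
          hξint.1.aemeasurable.ennreal_ofReal (hφ.mono hm le_rfl).aemeasurable]
        simp only [Pi.mul_apply, mul_comm]
    _ = ∫⁻ ω, φ ω ∂μ := by
        rw [trim_withDensity_ofReal_eq_of_condExp_eq_one hm hξ hξint hcond,
          lintegral_trim hm hφ]

theorem integrable_mul_of_condExp_eq_one (hm : m ≤ m0) (hξ : 0 ≤ᵐ[μ] ξ)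
    (hξint : Integrable ξ μ) (hcond : μ[ξ|m] =ᵐ[μ] 1) {φ : Ω → ℝ}
    (hφ : StronglyMeasurable[m] φ) (hφint : Integrable φ μ) : Integrable (φ * ξ) μ := by
  refine ⟨(hφ.mono hm).aestronglyMeasurable.mul hξint.1, ?_⟩
  have hnorm : (fun ω => ‖(φ * ξ) ω‖ₑ) =ᵐ[μ] fun ω => ‖φ ω‖ₑ * ENNReal.ofReal (ξ ω) := by
    filter_upwards [hξ] with ω hω
    rw [Pi.mul_apply, enorm_mul, Real.enorm_of_nonneg hω]
  rw [hasFiniteIntegral_iff_enorm, lintegral_congr_ae hnorm,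
    lintegral_mul_ofReal_eq_of_condExp_eq_one hm hξ hξint hcond
      (@StronglyMeasurable.enorm _ m _ _ _ _ hφ)]
  exact hφint.2

theorem condExp_mul_of_condExp_eq_one (hm : m ≤ m0) (hξ : 0 ≤ᵐ[μ] ξ)
    (hξint : Integrable ξ μ) (hcond : μ[ξ|m] =ᵐ[μ] 1) {φ : Ω → ℝ}
    (hφ : StronglyMeasurable[m] φ) (hφint : Integrable φ μ) : μ[φ * ξ|m] =ᵐ[μ] φ := by
  filter_upwards [condExp_mul_of_stronglyMeasurable_left hφ
    (integrable_mul_of_condExp_eq_one hm hξ hξint hcond hφ hφint) hξint, hcond] with ω h h1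
  simp [h, h1]

end CondExpEqOne

section MartingaleAdd

variable {Ω : Type*} {m0 : MeasurableSpace Ω} {ℱ : Filtration ℕ m0} {μ : Measure Ω}
  {f g : ℕ → Ω → ℝ} {m : ℕ}

theorem integrable_of_martingale_add (hfg : Martingale (f + g) ℱ μ) (hf : Integrable (f m) μ) :
    Integrable (g m) μ := by
  simpa using (hfg.integrable m).sub hf

theorem integral_le_of_martingale_add [IsFiniteMeasure μ] (hfg : Martingale (f + g) ℱ μ)
    (hg : g 0 = 0) (hf : 0 ≤ f m) (hfint : Integrable (f m) μ) :
    ∫ ω, g m ω ∂μ ≤ ∫ ω, f 0 ω ∂μ := by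
  have hconst : ∫ ω, f m ω + g m ω ∂μ = ∫ ω, f 0 ω ∂μ :=
    calc ∫ ω, f m ω + g m ω ∂μ = ∫ ω, μ[(f + g) m|ℱ 0] ω ∂μ :=
          (integral_condExp (ℱ.le 0)).symm
      _ = ∫ ω, f 0 ω + g 0 ω ∂μ := integral_congr_ae (hfg.condExp_ae_eq m.zero_le)
      _ = ∫ ω, f 0 ω ∂μ := by simp [hg]
  calc ∫ ω, g m ω ∂μ = ∫ ω, f m ω + g m ω ∂μ - ∫ ω, f m ω ∂μ := by
        rw [integral_add hfint (integrable_of_martingale_add hfg hfint)]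
        ring
    _ ≤ ∫ ω, f 0 ω ∂μ := by
        rw [hconst]
        exact sub_le_self _ (integral_nonneg hf)

end MartingaleAdd

section RatioOfCompensator

variable {Ω : Type*} {m0 : MeasurableSpace Ω} {ℱ : Filtration ℕ m0} {μ : Measure Ω}
  {f g : ℕ → Ω → ℝ} {m : ℕ} {ω : Ω}

noncomputable def ratioOfCompensator (f g : ℕ → Ω → ℝ) : ℕ → Ω → ℝ
  | 0 => 1
  | m + 1 => fun ω => (f (m + 1) ω + g (m + 1) ω - g m ω) / f m ω

theorem adapted_ratioOfCompensator (hf : Adapted ℱ f) (hg : Adapted ℱ g) :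
    Adapted ℱ (ratioOfCompensator f g)
  | 0 => measurable_const
  | m + 1 => ((hf (m + 1)).add (hg (m + 1))).sub (hg.measurable_le m.le_succ) |>.div
      (hf.measurable_le m.le_succ)

theorem ratioOfCompensator_nonneg (hf : ∀ m ω, 0 ≤ f m ω) (hg : ∀ m ω, g m ω ≤ g (m + 1) ω) :
    ∀ m ω, 0 ≤ ratioOfCompensator f g m ω
  | 0, _ => zero_le_one
  | m + 1, ω => div_nonneg (by linarith [hf (m + 1) ω, hg m ω]) (hf m ω)

theorem div_le_ratioOfCompensator (hf : 0 ≤ f m ω) (hg : g m ω ≤ g (m + 1) ω) :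
    f (m + 1) ω / f m ω ≤ ratioOfCompensator f g (m + 1) ω :=
  div_le_div_of_nonneg_right (by linarith) hf

theorem integrable_ratioOfCompensator {a : ℝ} (ha : 0 < a) (hfa : ∀ m ω, a ≤ f m ω)
    (hf : Adapted ℱ f) (hg : Adapted ℱ g) (hg_mono : ∀ m ω, g m ω ≤ g (m + 1) ω)
    (hfint : ∀ m, Integrable (f m) μ) (hgint : ∀ m, Integrable (g m) μ) (m : ℕ) :
    Integrable (ratioOfCompensator f g (m + 1)) μ := by
  refine (((hfint (m + 1)).add (hgint (m + 1))).sub (hgint m)).const_mul a⁻¹ |>.mono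
    ((adapted_ratioOfCompensator hf hg (m + 1)).mono (ℱ.le _) le_rfl).aestronglyMeasurable
    (Eventually.of_forall fun ω => ?_)
  have hnum : 0 ≤ f (m + 1) ω + g (m + 1) ω - g m ω := by
    linarith [ha.trans_le (hfa (m + 1) ω), hg_mono m ω]
  simp only [ratioOfCompensator, Pi.sub_apply, Pi.add_apply, norm_div, norm_mul,
    Real.norm_of_nonneg hnum, Real.norm_of_nonneg (ha.trans_le (hfa m ω)).le,
    Real.norm_of_nonneg (inv_nonneg.2 ha.le)]
  rw [inv_mul_eq_div]
  exact div_le_div_of_nonneg_left hnum ha (hfa m ω)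

theorem condExp_ratioOfCompensator [IsFiniteMeasure μ] (hf_pos : ∀ ω, 0 < f m ω)
    (hf : Adapted ℱ f) (hg : Adapted ℱ g) (hgint : ∀ m, Integrable (g m) μ)
    (hfg : Martingale (f + g) ℱ μ) (hint : Integrable (ratioOfCompensator f g (m + 1)) μ) :
    μ[ratioOfCompensator f g (m + 1)|ℱ m] =ᵐ[μ] 1 := by
  have hincr : μ[(f + g) (m + 1) - g m|ℱ m] =ᵐ[μ] f m := by
    filter_upwards [condExp_sub (hfg.integrable (m + 1)) (hgint m) (ℱ m),
      hfg.condExp_ae_eq m.le_succ] with ω h1 h2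
    rw [h1, Pi.sub_apply, h2,
      condExp_of_stronglyMeasurable (ℱ.le m) (hg m).stronglyMeasurable (hgint m)]
    simp
  have hratio : ratioOfCompensator f g (m + 1) = (f m)⁻¹ * ((f + g) (m + 1) - g m) := by
    ext ω; simp [ratioOfCompensator, div_eq_inv_mul]
  rw [hratio] at hint ⊢
  filter_upwards [condExp_mul_of_stronglyMeasurable_left (hf m).inv.stronglyMeasurable hint
    ((hfg.integrable (m + 1)).sub (hgint m)), hincr] with ω h1 h2
  rw [h1, Pi.mul_apply, h2]
  exact inv_mul_cancel₀ (hf_pos ω).ne'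

end RatioOfCompensator

section CompensatorOfRatio

variable {Ω : Type*} {m0 : MeasurableSpace Ω} {ℱ : Filtration ℕ m0} {μ : Measure Ω}
  {f ξ : ℕ → Ω → ℝ} {m : ℕ}

noncomputable def compensatorOfRatio (f ξ : ℕ → Ω → ℝ) (m : ℕ) (ω : Ω) : ℝ :=
  ∑ k ∈ Finset.range m, max (f k ω * ξ (k + 1) ω - f (k + 1) ω) 0

@[simp]
theorem compensatorOfRatio_zero : compensatorOfRatio f ξ 0 = 0 := by
  ext; simp [compensatorOfRatio]

theorem compensatorOfRatio_succ (m : ℕ) (ω : Ω) :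
    compensatorOfRatio f ξ (m + 1) ω =
      compensatorOfRatio f ξ m ω + max (f m ω * ξ (m + 1) ω - f (m + 1) ω) 0 :=
  Finset.sum_range_succ _ _

theorem compensatorOfRatio_nonneg (m : ℕ) (ω : Ω) : 0 ≤ compensatorOfRatio f ξ m ω :=
  Finset.sum_nonneg fun _ _ => le_max_right _ _

theorem compensatorOfRatio_le_succ (m : ℕ) (ω : Ω) :
    compensatorOfRatio f ξ m ω ≤ compensatorOfRatio f ξ (m + 1) ω := by
  rw [compensatorOfRatio_succ]
  exact le_add_of_nonneg_right (le_max_right _ _)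

theorem adapted_compensatorOfRatio (hf : Adapted ℱ f) (hξ : Adapted ℱ ξ) :
    Adapted ℱ (compensatorOfRatio f ξ) := fun m =>
  Finset.measurable_sum _ fun k hk =>
    have hk : k + 1 ≤ m := Finset.mem_range.1 hk
    (((hf.measurable_le (Nat.le_of_succ_le hk)).mul (hξ.measurable_le hk)).sub
      (hf.measurable_le hk)).max measurable_const

theorem add_compensatorOfRatio_succ_ae_eq (hf : ∀ ω, 0 < f m ω)
    (hξ : (fun ω => f (m + 1) ω / f m ω) ≤ᵐ[μ] ξ (m + 1)) :
    (f + compensatorOfRatio f ξ) (m + 1) =ᵐ[μ]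
      f m * ξ (m + 1) + compensatorOfRatio f ξ m := by
  filter_upwards [hξ] with ω hω
  have : f (m + 1) ω ≤ f m ω * ξ (m + 1) ω := by
    rwa [div_le_iff₀' (hf ω)] at hω
  simp only [Pi.add_apply, Pi.mul_apply, compensatorOfRatio_succ,
    max_eq_left (sub_nonneg.2 this)]
  ring

variable [IsFiniteMeasure μ]

theorem integrable_compensatorOfRatio (hf : Adapted ℱ f)
    (hfint : ∀ m, Integrable (f m) μ) (hξ_nonneg : ∀ m ω, 0 ≤ ξ m ω)
    (hξint : ∀ m, Integrable (ξ (m + 1)) μ) (hξ : ∀ m, μ[ξ (m + 1)|ℱ m] =ᵐ[μ] 1) (m : ℕ) :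
    Integrable (compensatorOfRatio f ξ m) μ :=
  integrable_finsetSum _ fun k _ =>
    ((integrable_mul_of_condExp_eq_one (ℱ.le k) (Eventually.of_forall (hξ_nonneg _)) (hξint k)
      (hξ k) (hf k).stronglyMeasurable (hfint k)).sub (hfint (k + 1))).pos_part

theorem martingale_add_compensatorOfRatio (hf_pos : ∀ m ω, 0 < f m ω) (hf : Adapted ℱ f)
    (hfint : ∀ m, Integrable (f m) μ) (hξ_nonneg : ∀ m ω, 0 ≤ ξ m ω) (hξm : Adapted ℱ ξ)
    (hξint : ∀ m, Integrable (ξ (m + 1)) μ) (hξ : ∀ m, μ[ξ (m + 1)|ℱ m] =ᵐ[μ] 1)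
    (hle : ∀ m, (fun ω => f (m + 1) ω / f m ω) ≤ᵐ[μ] ξ (m + 1)) :
    Martingale (f + compensatorOfRatio f ξ) ℱ μ := by
  have hgint := integrable_compensatorOfRatio hf hfint hξ_nonneg hξint hξ
  refine martingale_nat ((hf.add (adapted_compensatorOfRatio hf hξm)).stronglyAdapted)
    (fun m => (hfint m).add (hgint m)) fun m => ?_
  have hξ_nonneg' : 0 ≤ᵐ[μ] ξ (m + 1) := Eventually.of_forall (hξ_nonneg _)
  have hmul := integrable_mul_of_condExp_eq_one (ℱ.le m) hξ_nonneg' (hξint m) (hξ m)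
    (hf m).stronglyMeasurable (hfint m)
  filter_upwards [condExp_congr_ae (add_compensatorOfRatio_succ_ae_eq (hf_pos m) (hle m)),
    condExp_add hmul (hgint m) (ℱ m),
    condExp_mul_of_condExp_eq_one (ℱ.le m) hξ_nonneg' (hξint m) (hξ m)
      (hf m).stronglyMeasurable (hfint m)] with ω h1 h2 h3
  rw [h1, h2, Pi.add_apply _ _ ω, h3, condExp_of_stronglyMeasurable (ℱ.le m)
    (adapted_compensatorOfRatio hf hξm m).stronglyMeasurable (hgint m)]
  rfl

end CompensatorOfRatio

theorem stmt10_general {Ω : Type*} {m0 : MeasurableSpace Ω} (ℱ : Filtration ℕ m0)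
    (M : Set (Measure Ω)) (hne : M.Nonempty)
    (hprob : ∀ P ∈ M, IsProbabilityMeasure P)
    (f : ℕ → Ω → ℝ)
    (a : ℝ) (ha : 0 < a) (hfa : ∀ m ω, a ≤ f m ω)
    (hsm : ∀ P ∈ M, Supermartingale f ℱ P)
    (hbdd : ∀ m, ∃ C : ℝ, ∀ P ∈ M, ∫ ω, |f m ω| ∂P ≤ C) :
    (∃ g : ℕ → Ω → ℝ,
        Adapted ℱ g ∧ (∀ m ω, 0 ≤ g m ω) ∧ (∀ ω, g 0 ω = 0) ∧
        (∀ m ω, g m ω ≤ g (m + 1) ω) ∧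
        (∀ m, ∃ C : ℝ, ∀ P ∈ M, ∫ ω, g m ω ∂P ≤ C) ∧
        (∀ P ∈ M, Martingale (fun m ω => f m ω + g m ω) ℱ P))
    ↔
    (∃ ξ0 : ℕ → Ω → ℝ,
        (∀ m, StronglyMeasurable[ℱ m] (ξ0 m)) ∧
        (∀ m ω, 0 ≤ ξ0 m ω) ∧
        (∀ P ∈ M, ∀ m : ℕ, Integrable (ξ0 (m + 1)) P ∧
          P[ξ0 (m + 1) | ℱ m] =ᵐ[P] fun _ => (1 : ℝ)) ∧
        (∀ P ∈ M, ∀ m : ℕ,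
          (fun ω => f (m + 1) ω / f m ω) ≤ᵐ[P] ξ0 (m + 1))) := by
  obtain ⟨P₀, hP₀⟩ := hne
  have hf : Adapted ℱ f := (hsm P₀ hP₀).stronglyAdapted.adapted
  have hf_pos : ∀ m ω, 0 < f m ω := fun m ω => ha.trans_le (hfa m ω)
  constructor
  · rintro ⟨g, hg, -, -, hg_mono, -, hfg⟩
    refine ⟨ratioOfCompensator f g, (adapted_ratioOfCompensator hf hg).stronglyAdapted,
      ratioOfCompensator_nonneg (fun m ω => (hf_pos m ω).le) hg_mono, fun P hP m => ?_,
      fun P hP m => Eventually.of_forall fun ω =>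
        div_le_ratioOfCompensator (hf_pos m ω).le (hg_mono m ω)⟩
    have := hprob P hP
    have hfint := (hsm P hP).integrable
    have hgint := fun k => integrable_of_martingale_add (hfg P hP) (hfint k)
    have hint := integrable_ratioOfCompensator ha hfa hf hg hg_mono hfint hgint m
    exact ⟨hint, condExp_ratioOfCompensator (hf_pos m) hf hg hgint (hfg P hP) hint⟩
  · rintro ⟨ξ, hξm, hξ_nonneg, hξ, hle⟩
    have hmart : ∀ P ∈ M, Martingale (f + compensatorOfRatio f ξ) ℱ P := fun P hP => by
      have := hprob P hP
      exact martingale_add_compensatorOfRatio hf_pos hf (hsm P hP).integrable hξ_nonneg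
        (fun m => (hξm m).measurable) (fun m => (hξ P hP m).1) (fun m => (hξ P hP m).2) (hle P hP)
    refine ⟨compensatorOfRatio f ξ, adapted_compensatorOfRatio hf fun m => (hξm m).measurable,
      compensatorOfRatio_nonneg, fun _ => by simp, compensatorOfRatio_le_succ, fun m => ?_, hmart⟩
    obtain ⟨C, hC⟩ := hbdd 0
    refine ⟨C, fun P hP => ?_⟩
    have := hprob P hP
    have hfint := (hsm P hP).integrable
    calc ∫ ω, compensatorOfRatio f ξ m ω ∂P ≤ ∫ ω, f 0 ω ∂P :=
          integral_le_of_martingale_add (hmart P hP) compensatorOfRatio_zero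
            (fun ω => (hf_pos m ω).le) (hfint m)
      _ ≤ ∫ ω, |f 0 ω| ∂P := integral_mono (hfint 0) (hfint 0).abs fun ω => le_abs_self _
      _ ≤ C := hC P hP

theorem stmt10 {Ω : Type*} {m0 : MeasurableSpace Ω} (ℱ : Filtration ℕ m0)
    (M : Set (Measure Ω)) (hne : M.Nonempty)
    (hprob : ∀ P ∈ M, IsProbabilityMeasure P)
    (hequiv : ∀ P ∈ M, ∀ Q ∈ M, P ≪ Q)
    (f : ℕ → Ω → ℝ)
    (a : ℝ) (ha : 0 < a) (hfa : ∀ m ω, a ≤ f m ω)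
    (hsm : ∀ P ∈ M, Supermartingale f ℱ P)
    (hbdd : ∀ m, ∃ C : ℝ, ∀ P ∈ M, ∫ ω, |f m ω| ∂P ≤ C) :
    (∃ g : ℕ → Ω → ℝ,
        Adapted ℱ g ∧ (∀ m ω, 0 ≤ g m ω) ∧ (∀ ω, g 0 ω = 0) ∧
        (∀ m ω, g m ω ≤ g (m + 1) ω) ∧
        (∀ m, ∃ C : ℝ, ∀ P ∈ M, ∫ ω, g m ω ∂P ≤ C) ∧
        (∀ P ∈ M, Martingale (fun m ω => f m ω + g m ω) ℱ P))
    ↔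
    (∃ ξ0 : ℕ → Ω → ℝ,
        (∀ m, StronglyMeasurable[ℱ m] (ξ0 m)) ∧
        (∀ m ω, 0 ≤ ξ0 m ω) ∧
        (∀ P ∈ M, ∀ m : ℕ, Integrable (ξ0 (m + 1)) P ∧
          P[ξ0 (m + 1) | ℱ m] =ᵐ[P] fun _ => (1 : ℝ)) ∧
        (∀ P ∈ M, ∀ m : ℕ,
          (fun ω => f (m + 1) ω / f m ω) ≤ᵐ[P] ξ0 (m + 1))) :=
  stmt10_general ℱ M hne hprob f a ha hfa hsm hbdd
end

section
/- Let $M$ be a regular set of measures on $(\Omega, \mathcal{F})$ with filtration $\mathcal{F}_n$, and let $\{f_m, \mathcal{F}_m\}_{m=0}^\infty$ be a nonnegative uniformly integrable local regular super-martingale relative to $M$ with decomposition $f_m = M_m - \sum_{i=1}^m \bar g^0_i$, where $M_m$ is a martingale and $\bar g^0_i \ge 0$. Then, setting $g_\infty = \lim_{m\to\infty} \sum_{i=1}^m \bar g^0_i$ and $f_\infty = \lim_m f_m$, the random variable $\xi = \frac{f_\infty + g_\infty}{f_0}$ satisfies $E^P \xi = 1$ for all $P \in M$, and $M_m = f_0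 \cdot E^P\{\xi \mid \mathcal{F}_m\}$ for all $m$ and $P \in M$. -/
/-!
For `s ∈ ℱ m` and `n ≥ m` the martingale property gives `∫_s Mart m = ∫_s f n + ∫_s ∑_{i ≤ n} ḡ⁰_i`.
As `n → ∞`, uniform integrability makes `f n → f_∞` in `L¹`, and the partial sums increase to
`g_∞`, which is integrable by Fatou because their means are at most `E Mart 0 = f₀`. Hence
`∫_s Mart m = ∫_s (f_∞ + g_∞)`, i.e. `Mart m = E[f_∞ + g_∞ | ℱ m]`; at `m = 0`, where
`Mart 0 = f₀ = c`, this is `E ξ = 1`.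
-/

open MeasureTheory Filter Topology

namespace MeasureTheory

variable {Ω E : Type*} {m0 : MeasurableSpace Ω} {μ : Measure Ω}

theorem integrable_of_tendsto_ae_of_integral_norm_le [NormedAddCommGroup E]
    {F : ℕ → Ω → E} {G : Ω → E} {C : ℝ} (hF : ∀ n, Integrable (F n) μ)
    (hC : ∀ n, ∫ x, ‖F n x‖ ∂μ ≤ C)
    (hlim : ∀ᵐ x ∂μ, Tendsto (fun n => F n x) atTop (𝓝 (G x))) :
    Integrable G μ := by
  refine ⟨aestronglyMeasurable_of_tendsto_ae atTop (fun n => (hF n).1) hlim, ?_⟩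
  have hlintegral (n : ℕ) : ∫⁻ x, ‖F n x‖ₑ ∂μ ≤ ENNReal.ofReal C := by
    rw [← ofReal_integral_norm_eq_lintegral_enorm (hF n)]
    exact ENNReal.ofReal_le_ofReal (hC n)
  calc ∫⁻ x, ‖G x‖ₑ ∂μ = ∫⁻ x, liminf (fun n => ‖F n x‖ₑ) atTop ∂μ :=
        lintegral_congr_ae (by filter_upwards [hlim] with x hx using hx.enorm.liminf_eq.symm)
    _ ≤ liminf (fun n => ∫⁻ x, ‖F n x‖ₑ ∂μ) atTop :=
        lintegral_liminf_le' fun n => (hF n).1.enorm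
    _ ≤ ENNReal.ofReal C := liminf_le_of_frequently_le (Frequently.of_forall hlintegral)
    _ < ⊤ := ENNReal.ofReal_lt_top

theorem UniformIntegrable.tendsto_setIntegral_of_ae_tendsto [IsFiniteMeasure μ]
    [NormedAddCommGroup E] [NormedSpace ℝ E] {f : ℕ → Ω → E} {g : Ω → E}
    (hf : UniformIntegrable f 1 μ) (hlim : ∀ᵐ x ∂μ, Tendsto (fun n => f n x) atTop (𝓝 (g x)))
    (s : Set Ω) :
    Tendsto (fun n => ∫ x in s, f n x ∂μ) atTop (𝓝 (∫ x in s, g x ∂μ)) := by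
  have hg : Integrable g μ := hf.integrable_of_ae_tendsto hlim
  refine tendsto_setIntegral_of_L1' g hg.1
    (Eventually.of_forall fun n => memLp_one_iff_integrable.1 (hf.memLp n)) ?_ s
  exact tendsto_Lp_finite_of_tendsto_ae le_rfl ENNReal.one_ne_top (fun n => hf.1 n)
    (memLp_one_iff_integrable.2 hg) hf.2.1 hlim

theorem Martingale.ae_eq_condExp_of_tendsto_setIntegral [IsFiniteMeasure μ]
    [NormedAddCommGroup E] [NormedSpace ℝ E] [CompleteSpace E] {ℱ : Filtration ℕ m0}
    {X : ℕ → Ω → E} {Y : Ω → E} (hX : Martingale X ℱ μ) (hY : Integrable Y μ)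
    (hlim : ∀ s, MeasurableSet s →
      Tendsto (fun n => ∫ x in s, X n x ∂μ) atTop (𝓝 (∫ x in s, Y x ∂μ)))
    (m : ℕ) : X m =ᵐ[μ] μ[Y | ℱ m] := by
  refine ae_eq_condExp_of_forall_setIntegral_eq (ℱ.le m) hY
    (fun s _ _ => (hX.integrable m).integrableOn) (fun s hs _ => ?_)
    (hX.stronglyAdapted m).aestronglyMeasurable
  refine tendsto_nhds_unique (tendsto_const_nhds.congr' ?_) (hlim s (ℱ.le m s hs))
  filter_upwards [eventually_ge_atTop m] with n hn using hX.setIntegral_eq hn hs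

theorem Martingale.ae_eq_condExp_of_uniformIntegrable_add_monotone [IsFiniteMeasure μ]
    {ℱ : Filtration ℕ m0} {X f S : ℕ → Ω → ℝ} {fLim SLim : Ω → ℝ}
    (hX : Martingale X ℱ μ) (hXfS : ∀ n, X n = f n + S n)
    (hf_nonneg : ∀ n x, 0 ≤ f n x) (hf : UniformIntegrable f 1 μ)
    (hS_nonneg : ∀ n x, 0 ≤ S n x) (hS_mono : ∀ x, Monotone fun n => S n x)
    (hflim : ∀ᵐ x ∂μ, Tendsto (fun n => f n x) atTop (𝓝 (fLim x)))
    (hSlim : ∀ᵐ x ∂μ, Tendsto (fun n => S n x) atTop (𝓝 (SLim x))) (m : ℕ) :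
    X m =ᵐ[μ] μ[fLim + SLim | ℱ m] := by
  have hfint (n : ℕ) : Integrable (f n) μ := memLp_one_iff_integrable.1 (hf.memLp n)
  have hSint (n : ℕ) : Integrable (S n) μ := by
    simpa [hXfS n] using (hX.integrable n).sub (hfint n)
  have hS_integral_le (n : ℕ) : ∫ x, ‖S n x‖ ∂μ ≤ ∫ x, X 0 x ∂μ :=
    calc ∫ x, ‖S n x‖ ∂μ = ∫ x, S n x ∂μ :=
          integral_congr_ae (Eventually.of_forall fun x => Real.norm_of_nonneg (hS_nonneg n x))
      _ ≤ ∫ x, f n x ∂μ + ∫ x, S n x ∂μ :=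
          le_add_of_nonneg_left (integral_nonneg (hf_nonneg n))
      _ = ∫ x, X n x ∂μ := by rw [hXfS n, ← integral_add (hfint n) (hSint n)]; rfl
      _ = ∫ x, X 0 x ∂μ := by
          simpa using (hX.setIntegral_eq (Nat.zero_le n) MeasurableSet.univ).symm
  have hSLim : Integrable SLim μ :=
    integrable_of_tendsto_ae_of_integral_norm_le hSint hS_integral_le hSlim
  refine hX.ae_eq_condExp_of_tendsto_setIntegral
    ((hf.integrable_of_ae_tendsto hflim).add hSLim) (fun s _ => ?_) m
  simp only [hXfS, Pi.add_apply]
  rw [integral_add (hf.integrable_of_ae_tendsto hflim).integrableOn hSLim.integrableOn]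
  refine ((hf.tendsto_setIntegral_of_ae_tendsto hflim s).add
    (integral_tendsto_of_tendsto_of_monotone (fun n => (hSint n).integrableOn)
      hSLim.integrableOn (ae_restrict_of_ae (Eventually.of_forall hS_mono))
      (ae_restrict_of_ae hSlim))).congr fun n => ?_
  exact (integral_add (hfint n).integrableOn (hSint n).integrableOn).symm

end MeasureTheory

theorem stmt16_general {Ω : Type*} {m0 : MeasurableSpace Ω} (ℱ : Filtration ℕ m0)
    (M : Set (Measure Ω))
    (hprob : ∀ P ∈ M, IsProbabilityMeasure P)
    (f Mart : ℕ → Ω → ℝ) (g : ℕ → Ω → ℝ)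
    (hfpos : ∀ m ω, 0 ≤ f m ω)
    (hgpos : ∀ i ω, 0 ≤ g i ω)
    (hmart : ∀ P ∈ M, Martingale Mart ℱ P)
    (hdecomp : ∀ m ω, f m ω = Mart m ω - ∑ i ∈ Finset.range m, g (i + 1) ω)
    (c : ℝ) (hc : 0 < c) (hf0 : ∀ ω, f 0 ω = c)
    (hui : ∀ P ∈ M, UniformIntegrable f 1 P)
    (finf ginf : Ω → ℝ)
    (hftend : ∀ P ∈ M, ∀ᵐ ω ∂P, Tendsto (fun m => f m ω) atTop (nhds (finf ω)))
    (hgtend : ∀ P ∈ M, ∀ᵐ ω ∂P,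
      Tendsto (fun m => ∑ i ∈ Finset.range m, g (i + 1) ω) atTop (nhds (ginf ω))) :
    (∀ P ∈ M, ∫ ω, (finf ω + ginf ω) / c ∂P = 1) ∧
    (∀ P ∈ M, ∀ m : ℕ,
      Mart m =ᵐ[P] fun ω => c * (P[fun ω' => (finf ω' + ginf ω') / c | ℱ m]) ω) := by
  have hcond (P : Measure Ω) (hP : P ∈ M) (m : ℕ) :
      Mart m =ᵐ[P] P[finf + ginf | ℱ m] := by
    have := hprob P hP
    refine (hmart P hP).ae_eq_condExp_of_uniformIntegrable_add_monotone
      (S := fun n ω => ∑ i ∈ Finset.range n, g (i + 1) ω)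
      (fun n => funext fun ω => by simp [hdecomp]) hfpos (hui P hP)
      (fun n ω => Finset.sum_nonneg fun i _ => hgpos (i + 1) ω)
      (fun ω => monotone_nat_of_le_succ fun n => by
        simpa [Finset.sum_range_succ] using hgpos (n + 1) ω)
      (hftend P hP) (hgtend P hP) m
  have hMart0 : Mart 0 = fun _ => c := funext fun ω => by simpa [hf0] using (hdecomp 0 ω).symm
  refine ⟨fun P hP => ?_, fun P hP m => ?_⟩
  · have := hprob P hP
    have hmass : ∫ ω, (finf + ginf) ω ∂P = c :=
      calc ∫ ω, (finf + ginf) ω ∂P = ∫ ω, P[finf + ginf | ℱ 0] ω ∂P :=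
            (integral_condExp (ℱ.le 0)).symm
        _ = ∫ ω, Mart 0 ω ∂P := integral_congr_ae (hcond P hP 0).symm
        _ = c := by simp [hMart0]
    rw [integral_div]
    exact (div_eq_one_iff_eq hc.ne').2 hmass
  · have hξ : (fun ω => (finf ω + ginf ω) / c) = c⁻¹ • (finf + ginf) := by
      funext ω; simp [div_eq_inv_mul]
    filter_upwards [hcond P hP m, condExp_smul (μ := P) c⁻¹ (finf + ginf) (ℱ m)] with ω h1 h2
    rw [hξ, h2, h1]
    simp [hc.ne']

/-- From Theorem 5.2: for a nonnegative uniformly integrable local regular super-martingale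
`f_m = M_m - ∑_{i ≤ m} ḡ⁰_i` (with `f₀ = c > 0` constant), the random variable
`ξ = (f_∞ + g_∞)/f₀` has expectation `1` under every `P ∈ M` and `M_m = f₀ E^P[ξ | ℱ m]`. -/
theorem stmt16 {Ω : Type*} {m0 : MeasurableSpace Ω} (ℱ : Filtration ℕ m0)
    (M : Set (Measure Ω))
    (hprob : ∀ P ∈ M, IsProbabilityMeasure P)
    (hequiv : ∀ P ∈ M, ∀ Q ∈ M, P ≪ Q)
    (f Mart : ℕ → Ω → ℝ) (g : ℕ → Ω → ℝ)
    (hfpos : ∀ m ω, 0 ≤ f m ω)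
    (hgpos : ∀ i ω, 0 ≤ g i ω)
    (hgint : ∀ P ∈ M, ∀ i, Integrable (g i) P)
    (hmart : ∀ P ∈ M, Martingale Mart ℱ P)
    (hdecomp : ∀ m ω, f m ω = Mart m ω - ∑ i ∈ Finset.range m, g (i + 1) ω)
    (c : ℝ) (hc : 0 < c) (hf0 : ∀ ω, f 0 ω = c)
    (hui : ∀ P ∈ M, UniformIntegrable f 1 P)
    (finf ginf : Ω → ℝ)
    (hftend : ∀ P ∈ M, ∀ᵐ ω ∂P, Tendsto (fun m => f m ω) atTop (nhds (finf ω)))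
    (hgtend : ∀ P ∈ M, ∀ᵐ ω ∂P,
      Tendsto (fun m => ∑ i ∈ Finset.range m, g (i + 1) ω) atTop (nhds (ginf ω))) :
    (∀ P ∈ M, ∫ ω, (finf ω + ginf ω) / c ∂P = 1) ∧
    (∀ P ∈ M, ∀ m : ℕ,
      Mart m =ᵐ[P] fun ω => c * (P[fun ω' => (finf ω' + ginf ω') / c | ℱ m]) ω) :=
  stmt16_general ℱ M hprob f Mart g hfpos hgpos hmart hdecomp c hc hf0 hui finf ginf hftend hgtend
end

section
/- Let $\xi \in A_0$ and $M_m = E^P\{\xi \mid \mathcal{F}_m\}$, $P \in M$, the associated martingale for a regular set of measures $M$. Let $f_N$ be an $\mathcal{F}_N$-measurable integrable random variable ($N < \infty$) with $\sup_{P\in M} E^P |f_N| < \infty$, and suppose there exists $\alpha_0 \in \mathbb{R}$ such that $f_N \le \alpha_0 M_N$ pointwise. Then the process defined by $h_m = \alpha_0 M_m$ for $m < N$ and $h_m = f_N - \alpha_0 M_N + \alpha_0 M_m$ for $m \ge N$ (so $h_N = f_N$) is a local regular super-martingale relative to $M$. -/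
open MeasureTheory Filter

/-!
Writing `Z = α₀ M_N - f_N ≥ 0`, the process is `h = α₀ M - Z · 𝟙{N ≤ m}`. The step process
`Z · 𝟙{N ≤ m}` is adapted, nonnegative and increasing, and `E^P Z = α₀ - E^P f_N` is bounded
uniformly in `P ∈ M` because `E^P M_N = E^P ξ = 1`. So it compensates `h` into the martingale
`α₀ M` simultaneously for all `P ∈ M`, and `h` is a supermartingale as a martingale minus a
submartingale. When `N = 0` the step is taken at time `0`, so `h` is already a martingale and
the compensator is `0`.
-/

section StepProcess

variable {Ω : Type*} {m0 : MeasurableSpace Ω} {ℱ : Filtration ℕ m0} {μ : Measure Ω}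
  {N : ℕ} {Z : Ω → ℝ}

def stepProcess (N : ℕ) (Z : Ω → ℝ) : ℕ → Ω → ℝ := fun m => if N ≤ m then Z else 0

theorem stepProcess_zero_left (Z : Ω → ℝ) : stepProcess 0 Z = fun _ => Z :=
  funext fun m => if_pos m.zero_le

theorem stepProcess_at_zero_of_pos (hN : 0 < N) : stepProcess N Z 0 = 0 := by
  simp [stepProcess, hN.ne']

theorem stepProcess_nonneg (hZ : 0 ≤ Z) (m : ℕ) : 0 ≤ stepProcess N Z m := by
  unfold stepProcess
  split_ifs
  exacts [hZ, le_rfl]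

theorem stepProcess_le_succ (hZ : 0 ≤ Z) (m : ℕ) :
    stepProcess N Z m ≤ stepProcess N Z (m + 1) := by
  unfold stepProcess
  split_ifs <;> first | exact le_rfl | exact hZ | omega

theorem stronglyAdapted_stepProcess (hZ : StronglyMeasurable[ℱ N] Z) :
    StronglyAdapted ℱ (stepProcess N Z) := fun m => by
  unfold stepProcess
  split_ifs with hm
  exacts [hZ.mono (ℱ.mono hm), stronglyMeasurable_const]

theorem integrable_stepProcess (hZ : Integrable Z μ) (m : ℕ) :
    Integrable (stepProcess N Z m) μ := by
  unfold stepProcess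
  split_ifs
  exacts [hZ, integrable_zero _ _ _]

theorem integral_stepProcess_le (m : ℕ) :
    ∫ ω, stepProcess N Z m ω ∂μ ≤ max (∫ ω, Z ω ∂μ) 0 := by
  unfold stepProcess
  split_ifs
  exacts [le_max_left _ _, by simp]

theorem submartingale_of_le_succ [IsFiniteMeasure μ] {g : ℕ → Ω → ℝ}
    (hadp : StronglyAdapted ℱ g) (hint : ∀ m, Integrable (g m) μ)
    (hmono : ∀ m, g m ≤ᵐ[μ] g (m + 1)) : Submartingale g ℱ μ :=
  submartingale_nat hadp hint fun m =>
    (EventuallyEq.of_eq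
      (condExp_of_stronglyMeasurable (ℱ.le m) (hadp m) (hint m))).symm.le.trans
      (condExp_mono (hint m) (hint (m + 1)) (hmono m))

theorem submartingale_stepProcess [IsFiniteMeasure μ] (hZm : StronglyMeasurable[ℱ N] Z)
    (hZi : Integrable Z μ) (hZ : 0 ≤ Z) : Submartingale (stepProcess N Z) ℱ μ :=
  submartingale_of_le_succ (stronglyAdapted_stepProcess hZm) (integrable_stepProcess hZi)
    fun m => ae_of_all _ (stepProcess_le_succ hZ m)

theorem integral_const_mul_sub_le {X f : Ω → ℝ} (hX : Integrable X μ) (hf : Integrable f μ)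
    (hX1 : ∫ ω, X ω ∂μ = 1) (α : ℝ) :
    ∫ ω, α * X ω - f ω ∂μ ≤ α + ∫ ω, |f ω| ∂μ := by
  rw [integral_sub (hX.const_mul α) hf, integral_const_mul, hX1, mul_one, sub_eq_add_neg]
  exact add_le_add_right ((neg_le_abs _).trans abs_integral_le_integral_abs) α

end StepProcess

section LocallyRegular

variable {Ω : Type*} {m0 : MeasurableSpace Ω} {ℱ : Filtration ℕ m0}
  {M : Set (Measure Ω)} {h : ℕ → Ω → ℝ}

def IsLocallyRegular (ℱ : Filtration ℕ m0) (M : Set (Measure Ω)) (h : ℕ → Ω → ℝ) : Prop :=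
  ∃ g : ℕ → Ω → ℝ,
    Adapted ℱ g ∧ (∀ m ω, 0 ≤ g m ω) ∧ (∀ ω, g 0 ω = 0) ∧
      (∀ m ω, g m ω ≤ g (m + 1) ω) ∧
      (∀ m, ∃ C : ℝ, ∀ P ∈ M, ∫ ω, g m ω ∂P ≤ C) ∧
      (∀ P ∈ M, Martingale (fun m ω => h m ω + g m ω) ℱ P)

theorem isLocallyRegular_of_martingale (hh : ∀ P ∈ M, Martingale h ℱ P) :
    IsLocallyRegular ℱ M h :=
  ⟨0, adapted_const ℱ 0, fun _ _ => le_rfl, fun _ => rfl, fun _ _ => le_rfl,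
    fun _ => ⟨0, fun _ _ => by simp⟩, fun P hP => by simpa using hh P hP⟩

theorem isLocallyRegular_sub_stepProcess {X : ℕ → Ω → ℝ} {N : ℕ} {Z : Ω → ℝ}
    (hX : ∀ P ∈ M, Martingale X ℱ P) (hN : 0 < N) (hZm : StronglyMeasurable[ℱ N] Z)
    (hZ : 0 ≤ Z) (hZbdd : ∃ C : ℝ, ∀ P ∈ M, ∫ ω, Z ω ∂P ≤ C) :
    IsLocallyRegular ℱ M (X - stepProcess N Z) := by
  obtain ⟨C, hC⟩ := hZbdd
  refine ⟨stepProcess N Z, (stronglyAdapted_stepProcess hZm).adapted, stepProcess_nonneg hZ,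
    fun ω => congrFun (stepProcess_at_zero_of_pos hN) ω, stepProcess_le_succ hZ,
    fun m => ⟨max C 0, fun P hP => ?_⟩, fun P hP => by simpa using hX P hP⟩
  exact (integral_stepProcess_le m).trans (max_le_max_right 0 (hC P hP))

end LocallyRegular

theorem stmt17_general {Ω : Type*} {m0 : MeasurableSpace Ω} (ℱ : Filtration ℕ m0)
    (M : Set (Measure Ω))
    (hprob : ∀ P ∈ M, IsProbabilityMeasure P)
    (ξ : Ω → ℝ)
    (hξone : ∀ P ∈ M, ∫ ω, ξ ω ∂P = 1)
    (Mart : ℕ → Ω → ℝ)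
    (hMmart : ∀ P ∈ M, Martingale Mart ℱ P)
    (hMcond : ∀ P ∈ M, ∀ m : ℕ, Mart m =ᵐ[P] P[ξ | ℱ m])
    (N : ℕ) (fN : Ω → ℝ)
    (hfNmeas : StronglyMeasurable[ℱ N] fN)
    (hfNint : ∀ P ∈ M, Integrable fN P)
    (hfNbdd : ∃ C : ℝ, ∀ P ∈ M, ∫ ω, |fN ω| ∂P ≤ C)
    (α0 : ℝ) (hmaj : ∀ ω, fN ω ≤ α0 * Mart N ω)
    (h : ℕ → Ω → ℝ)
    (hdef : ∀ m ω, h m ω =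
      if m < N then α0 * Mart m ω else fN ω - α0 * Mart N ω + α0 * Mart m ω) :
    (∀ P ∈ M, Supermartingale h ℱ P) ∧
    ∃ g : ℕ → Ω → ℝ,
      Adapted ℱ g ∧ (∀ m ω, 0 ≤ g m ω) ∧ (∀ ω, g 0 ω = 0) ∧
      (∀ m ω, g m ω ≤ g (m + 1) ω) ∧
      (∀ m, ∃ C : ℝ, ∀ P ∈ M, ∫ ω, g m ω ∂P ≤ C) ∧
      (∀ P ∈ M, Martingale (fun m ω => h m ω + g m ω) ℱ P) := by
  set Z : Ω → ℝ := fun ω => α0 * Mart N ω - fN ω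
  have hZ : 0 ≤ Z := fun ω => sub_nonneg.2 (hmaj ω)
  have hh : h = α0 • Mart - stepProcess N Z := by
    funext m ω
    rw [hdef]
    simp only [stepProcess, Z, Pi.sub_apply, Pi.smul_apply, smul_eq_mul, not_le.symm]
    split_ifs <;> simp only [Pi.zero_apply] <;> ring
  have hZm : ∀ P ∈ M, StronglyMeasurable[ℱ N] Z := fun P hP =>
    (((hMmart P hP).stronglyAdapted N).const_mul α0).sub hfNmeas
  have hZi : ∀ P ∈ M, Integrable Z P := fun P hP =>
    (((hMmart P hP).integrable N).const_mul α0).sub (hfNint P hP)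
  refine ⟨fun P hP => ?_, ?_⟩
  · have := hprob P hP
    rw [hh]
    exact ((hMmart P hP).smul α0).supermartingale.sub_submartingale
      (submartingale_stepProcess (hZm P hP) (hZi P hP) hZ)
  -- `Z` is `ℱ N`-measurable only via the adaptedness of `Mart` under some `P ∈ M`.
  rcases M.eq_empty_or_nonempty with rfl | ⟨P₀, hP₀⟩
  · exact isLocallyRegular_of_martingale (by simp)
  rcases N.eq_zero_or_pos with rfl | hN
  · refine isLocallyRegular_of_martingale fun P hP => ?_
    have := hprob P hP
    rw [hh, stepProcess_zero_left]
    exact ((hMmart P hP).smul α0).sub (martingale_const_fun ℱ P (hZm P hP) (hZi P hP))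
  obtain ⟨C, hC⟩ := hfNbdd
  refine hh ▸ isLocallyRegular_sub_stepProcess (fun P hP => (hMmart P hP).smul α0) hN
    (hZm P₀ hP₀) hZ ⟨α0 + C, fun P hP => ?_⟩
  have := hprob P hP
  have hMN : ∫ ω, Mart N ω ∂P = 1 := by
    rw [integral_congr_ae (hMcond P hP N), integral_condExp (ℱ.le N), hξone P hP]
  exact (integral_const_mul_sub_le ((hMmart P hP).integrable N) (hfNint P hP) hMN α0).trans
    (add_le_add_right (hC P hP) α0)

/-- Corollary 5.1: if `f_N ≤ α₀ M_N` pointwise, where `M_m = E^P[ξ | ℱ m]` (`ξ ∈ A₀`) is the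
martingale of a regular set of measures `M`, then the process equal to `α₀ M_m` for `m < N`
and to `f_N - α₀ M_N + α₀ M_m` for `m ≥ N` is a local regular super-martingale relative
to `M`. -/
theorem stmt17 {Ω : Type*} {m0 : MeasurableSpace Ω} (ℱ : Filtration ℕ m0)
    (M : Set (Measure Ω))
    (hprob : ∀ P ∈ M, IsProbabilityMeasure P)
    (hequiv : ∀ P ∈ M, ∀ Q ∈ M, P ≪ Q)
    (ξ : Ω → ℝ) (hξpos : ∀ ω, 0 ≤ ξ ω)
    (hξint : ∀ P ∈ M, Integrable ξ P) (hξone : ∀ P ∈ M, ∫ ω, ξ ω ∂P = 1)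
    (Mart : ℕ → Ω → ℝ)
    (hMmart : ∀ P ∈ M, Martingale Mart ℱ P)
    (hMcond : ∀ P ∈ M, ∀ m : ℕ, Mart m =ᵐ[P] P[ξ | ℱ m])
    (N : ℕ) (fN : Ω → ℝ)
    (hfNmeas : StronglyMeasurable[ℱ N] fN)
    (hfNint : ∀ P ∈ M, Integrable fN P)
    (hfNbdd : ∃ C : ℝ, ∀ P ∈ M, ∫ ω, |fN ω| ∂P ≤ C)
    (α0 : ℝ) (hmaj : ∀ ω, fN ω ≤ α0 * Mart N ω)
    (h : ℕ → Ω → ℝ)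
    (hdef : ∀ m ω, h m ω =
      if m < N then α0 * Mart m ω else fN ω - α0 * Mart N ω + α0 * Mart m ω) :
    (∀ P ∈ M, Supermartingale h ℱ P) ∧
    ∃ g : ℕ → Ω → ℝ,
      Adapted ℱ g ∧ (∀ m ω, 0 ≤ g m ω) ∧ (∀ ω, g 0 ω = 0) ∧
      (∀ m ω, g m ω ≤ g (m + 1) ω) ∧
      (∀ m, ∃ C : ℝ, ∀ P ∈ M, ∫ ω, g m ω ∂P ≤ C) ∧
      (∀ P ∈ M, Martingale (fun m ω => h m ω + g m ω) ℱ P) :=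
  stmt17_general ℱ M hprob ξ hξone Mart hMmart hMcond N fN hfNmeas hfNint hfNbdd α0 hmaj h hdef
end
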